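/- arXiv:1406.2200 — 2 statements merged into one kernel-verified Lean document; each statement's English description precedes it below -/
import Mathlib

section
/- Fix real constants μ > 0, α > 0, J₂, and fix Θ > 0 and N with |N| ≤ Θ; set c = N/Θ, ε = −J₂ α² μ² / (4Θ⁴), and assume Q := 1 − (2 − 6c²)ε + (1 − 21c⁴)ε² > 0; set Θ̃ = Θ√Q, ζ = (Θ/Θ̃)(1 + (2 − 12c²)ε − (3 − 105c⁴)ε²), and χ = 6ε(1 − 7εc²) N/Θ̃. Let a > 0 and 0 ≤ e < 1 satisfy Θ̃² = μ a (1 − e²), set n = √(μ/a³), and let u : ℝ → ℝ be differentiable with u(t) − e sin u(t) = ℓ₀ + n t for all t, and let f : ℝ → ℝ be differentiable with cos f(t) = (cos u(t) − e)/(1 − e cos u(t)) and sin f(t) = √(1 − e²) sin u(t)/(1 − e cos u(t)) for all t. Define r(t) = a(1 − e cos u(t)), R(t) = √(μ a) e sin u(t)/r(t), θ(t) = θ₀ + ζ (f(t) − f(0)), ν(t) = ν₀ + χ (f(t) − f(0)). Then for all t: r(t) > 0, r′(t) = R(t), R′(t) = Θ̃²/r(t)³ − μ/r(t)², θ′(t)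 = ζ Θ̃ / r(t)², and ν′(t) = χ Θ̃ / r(t)². Moreover, ζ Θ̃ / r(t)² is the derivative at the given Θ of the map Θ ↦ ½(R(t)² + Θ̃(Θ, N)²/r(t)²) − μ/r(t), and χ Θ̃ / r(t)² is the derivative at the given N of the map N ↦ ½(R(t)² + Θ̃(Θ, N)²/r(t)²) − μ/r(t), where Θ̃(Θ, N) = Θ√(1 − (2 − 6(N/Θ)²)(−J₂α²μ²/(4Θ⁴)) + (1 − 21(N/Θ)⁴)(−J₂α²μ²/(4Θ⁴))²). Hence t ↦ (r, θ, ν, R, Θ, N)(t) is an exact solution of the Hamiltonian system of Deprit's radial intermediary D = ½(R² + Θ̃(Θ, N)²/r²) − μ/r in polar-nodal variables. -/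
set_option maxHeartbeats 1600000 in
/-- The curve `t ↦ (r, θ, ν, R, Θ, N)(t)` constructed in the appendix is an exact
solution of the Hamiltonian system of Deprit's radial intermediary
`D = ½(R² + Θ̃(Θ, N)²/r²) − μ/r` in polar-nodal variables: `r′ = R = ∂D/∂R`,
`R′ = Θ̃²/r³ − μ/r² = −∂D/∂r`, `θ′ = ζΘ̃/r² = ∂D/∂Θ`, `ν′ = χΘ̃/r² = ∂D/∂N`
(and `Θ`, `N` are constants since `D` is independent of `θ` and `ν`). -/
theorem stmt_0 (μ α J₂ Θ N : ℝ) (hμ : 0 < μ) (hα : 0 < α)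
    (hΘ : 0 < Θ) (hN : |N| ≤ Θ)
    (c ε Q Θt ζ χ : ℝ)
    (hc : c = N / Θ)
    (hε : ε = -(J₂ * α ^ 2 * μ ^ 2) / (4 * Θ ^ 4))
    (hQ : Q = 1 - (2 - 6 * c ^ 2) * ε + (1 - 21 * c ^ 4) * ε ^ 2)
    (hQpos : 0 < Q)
    (hΘt : Θt = Θ * Real.sqrt Q)
    (hζ : ζ = (Θ / Θt) * (1 + (2 - 12 * c ^ 2) * ε - (3 - 105 * c ^ 4) * ε ^ 2))
    (hχ : χ = 6 * ε * (1 - 7 * ε * c ^ 2) * N / Θt)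
    (a e : ℝ) (ha : 0 < a) (he0 : 0 ≤ e) (he1 : e < 1)
    (hae : Θt ^ 2 = μ * a * (1 - e ^ 2))
    (n : ℝ) (hn : n = Real.sqrt (μ / a ^ 3))
    (ℓ₀ θ₀ ν₀ : ℝ)
    (u : ℝ → ℝ) (hu : Differentiable ℝ u)
    (hKep : ∀ t : ℝ, u t - e * Real.sin (u t) = ℓ₀ + n * t)
    (f : ℝ → ℝ) (hf : Differentiable ℝ f)
    (hcosf : ∀ t, Real.cos (f t) = (Real.cos (u t) - e) / (1 - e * Real.cos (u t)))
    (hsinf : ∀ t, Real.sin (f t)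
      = Real.sqrt (1 - e ^ 2) * Real.sin (u t) / (1 - e * Real.cos (u t)))
    (r R θ ν : ℝ → ℝ)
    (hr : ∀ t, r t = a * (1 - e * Real.cos (u t)))
    (hR : ∀ t, R t = Real.sqrt (μ * a) * e * Real.sin (u t) / r t)
    (hθ : ∀ t, θ t = θ₀ + ζ * (f t - f 0))
    (hν : ∀ t, ν t = ν₀ + χ * (f t - f 0)) :
    ∀ t : ℝ,
      0 < r t ∧
      HasDerivAt r (R t) t ∧
      HasDerivAt R (Θt ^ 2 / (r t) ^ 3 - μ / (r t) ^ 2) t ∧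
      HasDerivAt θ (ζ * Θt / (r t) ^ 2) t ∧
      HasDerivAt ν (χ * Θt / (r t) ^ 2) t ∧
      HasDerivAt
        (fun Θ' : ℝ => (1 / 2) * ((R t) ^ 2
          + (Θ' * Real.sqrt (1 - (2 - 6 * (N / Θ') ^ 2)
                * (-(J₂ * α ^ 2 * μ ^ 2) / (4 * Θ' ^ 4))
              + (1 - 21 * (N / Θ') ^ 4)
                * (-(J₂ * α ^ 2 * μ ^ 2) / (4 * Θ' ^ 4)) ^ 2)) ^ 2 / (r t) ^ 2)
          - μ / r t)
        (ζ * Θt / (r t) ^ 2) Θ ∧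
      HasDerivAt
        (fun N' : ℝ => (1 / 2) * ((R t) ^ 2
          + (Θ * Real.sqrt (1 - (2 - 6 * (N' / Θ) ^ 2)
                * (-(J₂ * α ^ 2 * μ ^ 2) / (4 * Θ ^ 4))
              + (1 - 21 * (N' / Θ) ^ 4)
                * (-(J₂ * α ^ 2 * μ ^ 2) / (4 * Θ ^ 4)) ^ 2)) ^ 2 / (r t) ^ 2)
          - μ / r t)
        (χ * Θt / (r t) ^ 2) N := by
  intro t
  -- basic positivity facts
  have hΘne : Θ ≠ 0 := ne_of_gt hΘ
  have hane : a ≠ 0 := ne_of_gt ha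
  have hsQpos : 0 < Real.sqrt Q := Real.sqrt_pos.mpr hQpos
  have hΘtpos : 0 < Θt := by rw [hΘt]; positivity
  have hΘtne : Θt ≠ 0 := hΘtpos.ne'
  have hw : ∀ s : ℝ, 0 < 1 - e * Real.cos (u s) := by
    intro s
    nlinarith [Real.neg_one_le_cos (u s), Real.cos_le_one (u s)]
  have hrt : 0 < r t := by rw [hr]; exact mul_pos ha (hw t)
  have hn2 : n ^ 2 = μ / a ^ 3 := by rw [hn]; exact Real.sq_sqrt (by positivity)
  have hnpos : 0 < n := by rw [hn]; apply Real.sqrt_pos.mpr; positivity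
  have he2 : (0:ℝ) < 1 - e ^ 2 := by nlinarith
  have hk : Real.sqrt (μ * a) = n * a ^ 2 := by
    have h1 : (n * a ^ 2) ^ 2 = μ * a := by rw [mul_pow, hn2]; field_simp
    rw [← h1, Real.sqrt_sq (by positivity)]
  have hΘt' : Θt = Real.sqrt (1 - e ^ 2) * (n * a ^ 2) := by
    have h2 : (Real.sqrt (1 - e ^ 2) * (n * a ^ 2)) ^ 2 = Θt ^ 2 := by
      rw [mul_pow, Real.sq_sqrt he2.le, hae, mul_pow, hn2]; field_simp
    rw [← Real.sqrt_sq hΘtpos.le, ← h2, Real.sqrt_sq (by positivity)]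
  have hS2 : Real.sin (u t) ^ 2 = 1 - Real.cos (u t) ^ 2 := by
    linear_combination Real.sin_sq_add_cos_sq (u t)
  -- derivative of the eccentric anomaly from Kepler's equation
  have hu' : ∀ s, HasDerivAt u (n / (1 - e * Real.cos (u s))) s := by
    intro s
    have hd := (hu s).hasDerivAt
    have h1 : HasDerivAt (fun x => u x - e * Real.sin (u x))
        (deriv u s - e * (Real.cos (u s) * deriv u s)) s :=
      hd.sub (((Real.hasDerivAt_sin (u s)).comp s hd).const_mul e)
    have h2 : HasDerivAt (fun x => u x - e * Real.sin (u x)) n s := by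
      have heq : (fun x => u x - e * Real.sin (u x)) = fun x => ℓ₀ + n * x :=
        funext hKep
      rw [heq]
      simpa using ((hasDerivAt_id s).const_mul n).const_add ℓ₀
    have h3 : deriv u s - e * (Real.cos (u s) * deriv u s) = n := h1.unique h2
    have h4 : deriv u s = n / (1 - e * Real.cos (u s)) := by
      rw [eq_div_iff (hw s).ne']
      linear_combination h3
    rw [← h4]; exact hd
  -- r' = R
  have hrF : r = fun s => a * (1 - e * Real.cos (u s)) := funext hr
  have hden : ∀ s, HasDerivAt (fun x => a * (1 - e * Real.cos (u x)))
      (a * (e * (Real.sin (u s) * (n / (1 - e * Real.cos (u s)))))) s := by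
    intro s
    have h1 := ((Real.hasDerivAt_cos (u s)).comp s (hu' s)).const_mul e
    have h2 := (h1.const_sub 1).const_mul a
    refine h2.congr_deriv (Eq.symm ?_); ring
  have hrd : HasDerivAt r (R t) t := by
    rw [hrF]
    convert hden t using 1
    rw [hR, hr, hk]
    field_simp [hane, (hw t).ne']
  -- R'
  have hRd : HasDerivAt R (Θt ^ 2 / (r t) ^ 3 - μ / (r t) ^ 2) t := by
    have hRF : R = fun s => n * a ^ 2 * e * Real.sin (u s)
        / (a * (1 - e * Real.cos (u s))) := by
      funext s; rw [hR, hr, hk]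
    rw [hRF]
    have hnum : HasDerivAt (fun s => n * a ^ 2 * e * Real.sin (u s))
        (n * a ^ 2 * e * (Real.cos (u t) * (n / (1 - e * Real.cos (u t))))) t :=
      ((Real.hasDerivAt_sin (u t)).comp t (hu' t)).const_mul (n * a ^ 2 * e)
    have hdiv := hnum.div (hden t) (mul_pos ha (hw t)).ne'
    refine hdiv.congr_deriv (Eq.symm ?_)
    rw [hr, hae]
    have hmu : μ = n ^ 2 * a ^ 3 := by rw [hn2]; field_simp
    rw [hmu]
    field_simp [hane, (hw t).ne']
    linear_combination e ^ 2 * hS2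
  -- derivative of the true anomaly
  have hfd : HasDerivAt f (Θt / (r t) ^ 2) t := by
    have hwne : (1 - e * Real.cos (u t)) ≠ 0 := (hw t).ne'
    have hq : Real.sqrt (1 - e ^ 2) ^ 2 = 1 - e ^ 2 := Real.sq_sqrt he2.le
    have hwd : ∀ s, HasDerivAt (fun x => 1 - e * Real.cos (u x))
        (e * (Real.sin (u s) * (n / (1 - e * Real.cos (u s))))) s := by
      intro s
      have h1 := ((Real.hasDerivAt_cos (u s)).comp s (hu' s)).const_mul e
      refine (h1.const_sub 1).congr_deriv (Eq.symm ?_); ring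
    have hCder : HasDerivAt (fun s => (Real.cos (u s) - e) / (1 - e * Real.cos (u s)))
        (((-Real.sin (u t)) * (n / (1 - e * Real.cos (u t))) * (1 - e * Real.cos (u t))
          - (Real.cos (u t) - e) * (e * (Real.sin (u t) * (n / (1 - e * Real.cos (u t))))))
          / (1 - e * Real.cos (u t)) ^ 2) t :=
      (((Real.hasDerivAt_cos (u t)).comp t (hu' t)).sub_const e).div (hwd t) hwne
    have hSder : HasDerivAt
        (fun s => Real.sqrt (1 - e ^ 2) * Real.sin (u s) / (1 - e * Real.cos (u s)))
        ((Real.sqrt (1 - e ^ 2) * (Real.cos (u t) * (n / (1 - e * Real.cos (u t))))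
            * (1 - e * Real.cos (u t))
          - Real.sqrt (1 - e ^ 2) * Real.sin (u t)
            * (e * (Real.sin (u t) * (n / (1 - e * Real.cos (u t))))))
          / (1 - e * Real.cos (u t)) ^ 2) t :=
      (((Real.hasDerivAt_sin (u t)).comp t (hu' t)).const_mul
        (Real.sqrt (1 - e ^ 2))).div (hwd t) hwne
    have hc1 : HasDerivAt (fun s => Real.cos (f s)) (-Real.sin (f t) * deriv f t) t :=
      (Real.hasDerivAt_cos (f t)).comp t (hf t).hasDerivAt
    have hs1 : HasDerivAt (fun s => Real.sin (f s)) (Real.cos (f t) * deriv f t) t :=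
      (Real.hasDerivAt_sin (f t)).comp t (hf t).hasDerivAt
    rw [show (fun s => Real.cos (f s))
        = fun s => (Real.cos (u s) - e) / (1 - e * Real.cos (u s)) from funext hcosf]
      at hc1
    rw [show (fun s => Real.sin (f s))
        = fun s => Real.sqrt (1 - e ^ 2) * Real.sin (u s) / (1 - e * Real.cos (u s))
        from funext hsinf] at hs1
    have e1 := hc1.unique hCder
    have e2 := hs1.unique hSder
    have hpyth : Real.sin (f t) ^ 2 + Real.cos (f t) ^ 2 = 1 :=
      Real.sin_sq_add_cos_sq (f t)
    have hder : deriv f t = Θt / (r t) ^ 2 := by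
      have key : deriv f t = Real.cos (f t) * (Real.cos (f t) * deriv f t)
          + Real.sin (f t) * (Real.sin (f t) * deriv f t) := by
        linear_combination (deriv f t) * hpyth.symm
      have e1' : Real.sin (f t) * deriv f t
          = -((-Real.sin (u t) * (n / (1 - e * Real.cos (u t))) * (1 - e * Real.cos (u t)) -
          (Real.cos (u t) - e) * (e * (Real.sin (u t) * (n / (1 - e * Real.cos (u t)))))) /
        (1 - e * Real.cos (u t)) ^ 2) := by linear_combination -e1
      rw [key, e2, e1', hcosf, hsinf, hr, hΘt']
      field_simp
      have hwne' : 1 - Real.cos (u t) * e ≠ 0 := by rw [mul_comm]; exact hwne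
      rw [hS2, div_eq_div_iff (pow_ne_zero 4 hwne') (pow_ne_zero 2 hwne')]
      ring
    rw [← hder]; exact (hf t).hasDerivAt
  -- θ' and ν'
  have hθd : HasDerivAt θ (ζ * Θt / (r t) ^ 2) t := by
    rw [show θ = fun s => θ₀ + ζ * (f s - f 0) from funext hθ]
    have := ((hfd.sub_const (f 0)).const_mul ζ).const_add θ₀
    refine this.congr_deriv (Eq.symm ?_)
    ring
  have hνd : HasDerivAt ν (χ * Θt / (r t) ^ 2) t := by
    rw [show ν = fun s => ν₀ + χ * (f s - f 0) from funext hν]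
    have := ((hfd.sub_const (f 0)).const_mul χ).const_add ν₀
    refine this.congr_deriv (Eq.symm ?_)
    ring
  -- partial derivative with respect to Θ
  have h4ne : (4 : ℝ) * Θ ^ 4 ≠ 0 := by positivity
  have hq2 : Real.sqrt Q ^ 2 = Q := Real.sq_sqrt hQpos.le
  have hGΘ : 1 - (2 - 6 * (N / Θ) ^ 2) * (-(J₂ * α ^ 2 * μ ^ 2) / (4 * Θ ^ 4))
      + (1 - 21 * (N / Θ) ^ 4) * (-(J₂ * α ^ 2 * μ ^ 2) / (4 * Θ ^ 4)) ^ 2 = Q := by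
    rw [hQ, hc, hε]
  have hPθ : HasDerivAt
      (fun Θ' : ℝ => (1 / 2) * ((R t) ^ 2
        + (Θ' * Real.sqrt (1 - (2 - 6 * (N / Θ') ^ 2)
              * (-(J₂ * α ^ 2 * μ ^ 2) / (4 * Θ' ^ 4))
            + (1 - 21 * (N / Θ') ^ 4)
              * (-(J₂ * α ^ 2 * μ ^ 2) / (4 * Θ' ^ 4)) ^ 2)) ^ 2 / (r t) ^ 2)
        - μ / r t)
      (ζ * Θt / (r t) ^ 2) Θ := by
    have hB : HasDerivAt (fun x : ℝ => -(J₂ * α ^ 2 * μ ^ 2) / (4 * x ^ 4))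
        ((0 * (4 * Θ ^ 4) - -(J₂ * α ^ 2 * μ ^ 2) * (4 * (4 * Θ ^ 3))) / (4 * Θ ^ 4) ^ 2)
        Θ :=
      (hasDerivAt_const Θ (-(J₂ * α ^ 2 * μ ^ 2))).div
        ((hasDerivAt_pow 4 Θ).const_mul 4) h4ne
    have hA : HasDerivAt (fun x : ℝ => N / x) ((0 * Θ - N * 1) / Θ ^ 2) Θ :=
      (hasDerivAt_const Θ N).div (hasDerivAt_id Θ) hΘne
    have hG := (((hA.pow 2).const_mul 6).const_sub 2).mul hB
    have hG2 := (((hA.pow 4).const_mul 21).const_sub 1).mul (hB.pow 2)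
    have hGf := (hG.const_sub 1).add hG2
    have hsq := (Real.hasDerivAt_sqrt (by have := hQpos.ne'; rw [← hGΘ] at this; exact this)).comp Θ hGf
    have hΦ := (hasDerivAt_id Θ).mul hsq
    have hΦ2 := hΦ.pow 2
    have hFin := (((hΦ2.div_const ((r t) ^ 2)).const_add ((R t) ^ 2)).const_mul
      ((1:ℝ) / 2)).sub_const (μ / r t)
    refine hFin.congr_deriv (Eq.symm ?_)
    simp only [Function.comp, id_eq, Pi.add_apply, Pi.mul_apply, Pi.pow_apply, Pi.sub_apply]
    rw [hGΘ]
    have hζΘt : ζ * Θt = Θ * (1 + (2 - 12 * c ^ 2) * ε - (3 - 105 * c ^ 4) * ε ^ 2) := by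
      rw [hζ]; field_simp
    rw [hζΘt, hc, hε]
    field_simp [hΘne, hsQpos.ne']
    have hQp : Q * (16*Θ^12) = 16*Θ^12 + 8*(J₂*α^2*μ^2)*Θ^8
        - 24*(J₂*α^2*μ^2)*N^2*Θ^6 + (J₂*α^2*μ^2)^2*Θ^4 - 21*N^4*(J₂*α^2*μ^2)^2 := by
      rw [hQ, hc, hε]; field_simp; ring
    simp only [Nat.cast_ofNat, Nat.reduceSub, pow_one]
    rw [hq2, hQ, hc, hε]
    field_simp
    ring
  -- partial derivative with respect to N
  have hPN : HasDerivAt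
      (fun N' : ℝ => (1 / 2) * ((R t) ^ 2
        + (Θ * Real.sqrt (1 - (2 - 6 * (N' / Θ) ^ 2)
              * (-(J₂ * α ^ 2 * μ ^ 2) / (4 * Θ ^ 4))
            + (1 - 21 * (N' / Θ) ^ 4)
              * (-(J₂ * α ^ 2 * μ ^ 2) / (4 * Θ ^ 4)) ^ 2)) ^ 2 / (r t) ^ 2)
        - μ / r t)
      (χ * Θt / (r t) ^ 2) N := by
    have hA : HasDerivAt (fun x : ℝ => x / Θ) (1 / Θ) N := by
      simpa using (hasDerivAt_id N).div_const Θ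
    have hG := ((hA.pow 2).const_mul 6).const_sub 2
    have hG2 := ((hA.pow 4).const_mul 21).const_sub 1
    have hGf := ((hG.mul_const (-(J₂ * α ^ 2 * μ ^ 2) / (4 * Θ ^ 4))).const_sub 1).add
      (hG2.mul_const ((-(J₂ * α ^ 2 * μ ^ 2) / (4 * Θ ^ 4)) ^ 2))
    have hsq := (Real.hasDerivAt_sqrt (by have := hQpos.ne'; rw [← hGΘ] at this; exact this)).comp N hGf
    have hΦ := hsq.const_mul Θ
    have hΦ2 := hΦ.pow 2
    have hFin := (((hΦ2.div_const ((r t) ^ 2)).const_add ((R t) ^ 2)).const_mul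
      ((1:ℝ) / 2)).sub_const (μ / r t)
    refine hFin.congr_deriv (Eq.symm ?_)
    simp only [Function.comp, id_eq, Pi.add_apply, Pi.mul_apply, Pi.pow_apply, Pi.sub_apply]
    rw [hGΘ]
    have hχΘt : χ * Θt = 6 * ε * (1 - 7 * ε * c ^ 2) * N := by rw [hχ]; field_simp
    rw [hχΘt, hc, hε]
    field_simp [hΘne, hsQpos.ne']
    simp only [Nat.cast_ofNat, Nat.reduceSub, pow_one]
    field_simp
    ring
  exact ⟨hrt, hrd, hRd, hθd, hνd, hPθ, hPN⟩
end

section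
/- Fix μ > 0, α > 0, J₂ ∈ ℝ and N ∈ ℝ. For Θ > 0 define ε(Θ) = −J₂ α² μ² / (4Θ⁴), c(Θ) = N/Θ, and Θ̃(Θ) = Θ √(1 − (2 − 6c²)ε + (1 − 21c⁴)ε²). Then at every Θ > 0 where the radicand 1 − (2 − 6c²)ε + (1 − 21c⁴)ε² is positive, the function Θ ↦ Θ̃(Θ) is differentiable with derivative dΘ̃/dΘ = (Θ/Θ̃)[1 + (2 − 12c²)ε − (3 − 105c⁴)ε²]. In other words, the coefficient ζ of the intermediary solution is exactly the partial derivative of Θ̃ with respect to Θ. -/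
/-- The coefficient `ζ = (Θ/Θ̃)[1 + (2 − 12c²)ε − (3 − 105c⁴)ε²]` of the intermediary
solution is exactly the partial derivative of `Θ̃` with respect to `Θ`. -/
theorem stmt_13 (μ α J₂ N : ℝ) (hμ : 0 < μ) (hα : 0 < α) :
    ∀ Θ : ℝ, 0 < Θ →
      0 < 1 - (2 - 6 * (N / Θ) ^ 2) * (-(J₂ * α ^ 2 * μ ^ 2) / (4 * Θ ^ 4))
          + (1 - 21 * (N / Θ) ^ 4) * (-(J₂ * α ^ 2 * μ ^ 2) / (4 * Θ ^ 4)) ^ 2 →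
      HasDerivAt
        (fun Θ' : ℝ => Θ' * Real.sqrt
          (1 - (2 - 6 * (N / Θ') ^ 2) * (-(J₂ * α ^ 2 * μ ^ 2) / (4 * Θ' ^ 4))
            + (1 - 21 * (N / Θ') ^ 4) * (-(J₂ * α ^ 2 * μ ^ 2) / (4 * Θ' ^ 4)) ^ 2))
        ((Θ / (Θ * Real.sqrt
          (1 - (2 - 6 * (N / Θ) ^ 2) * (-(J₂ * α ^ 2 * μ ^ 2) / (4 * Θ ^ 4))
            + (1 - 21 * (N / Θ) ^ 4) * (-(J₂ * α ^ 2 * μ ^ 2) / (4 * Θ ^ 4)) ^ 2)))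
          * (1 + (2 - 12 * (N / Θ) ^ 2) * (-(J₂ * α ^ 2 * μ ^ 2) / (4 * Θ ^ 4))
            - (3 - 105 * (N / Θ) ^ 4) * (-(J₂ * α ^ 2 * μ ^ 2) / (4 * Θ ^ 4)) ^ 2))
        Θ := by
  intro Θ hΘ hpos
  have hΘ0 : Θ ≠ 0 := ne_of_gt hΘ
  set K : ℝ := -(J₂ * α ^ 2 * μ ^ 2) with hK
  have hden : (4 : ℝ) * Θ ^ 4 ≠ 0 := by positivity
  -- N/x
  have h1 : HasDerivAt (fun x : ℝ => N / x) ((0 * Θ - N * 1) / Θ ^ 2) Θ :=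
    (hasDerivAt_const Θ N).div (hasDerivAt_id Θ) hΘ0
  -- (N/x)^2 , (N/x)^4
  have h2 := h1.pow 2
  have h4 := h1.pow 4
  -- 4*x^4
  have hd : HasDerivAt (fun x : ℝ => 4 * x ^ 4) (4 * (4 * Θ ^ 3)) Θ :=
    (hasDerivAt_pow 4 Θ).const_mul 4
  -- eps = K/(4x^4)
  have he : HasDerivAt (fun x : ℝ => K / (4 * x ^ 4))
      ((0 * (4 * Θ ^ 4) - K * (4 * (4 * Θ ^ 3))) / (4 * Θ ^ 4) ^ 2) Θ :=
    (hasDerivAt_const Θ K).div hd hden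
  have he2 := he.pow 2
  -- 2 - 6 c^2
  have h3 := (hasDerivAt_const Θ (2:ℝ)).sub (h2.const_mul 6)
  -- 1 - 21 c^4
  have h5 := (hasDerivAt_const Θ (1:ℝ)).sub (h4.const_mul 21)
  -- radicand
  have hg := ((hasDerivAt_const Θ (1:ℝ)).sub (h3.mul he)).add (h5.mul he2)
  have hGpos : 0 < 1 - (2 - 6 * (N / Θ) ^ 2) * (K / (4 * Θ ^ 4))
      + (1 - 21 * (N / Θ) ^ 4) * (K / (4 * Θ ^ 4)) ^ 2 := hpos
  have hGne : (1 - (2 - 6 * (N / Θ) ^ 2) * (K / (4 * Θ ^ 4))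
      + (1 - 21 * (N / Θ) ^ 4) * (K / (4 * Θ ^ 4)) ^ 2) ≠ 0 := ne_of_gt hGpos
  have hsq := hg.sqrt hGne
  have hprod := (hasDerivAt_id Θ).mul hsq
  refine (hprod.congr_deriv ?_)
  symm
  simp only [Pi.add_apply, Pi.sub_apply, Pi.mul_apply, Pi.pow_apply, id_eq, Nat.cast_ofNat,
    show (2:ℕ) - 1 = 1 from rfl, show (4:ℕ) - 1 = 3 from rfl]
  set s : ℝ := Real.sqrt (1 - (2 - 6 * (N / Θ) ^ 2) * (K / (4 * Θ ^ 4))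
      + (1 - 21 * (N / Θ) ^ 4) * (K / (4 * Θ ^ 4)) ^ 2) with hs
  have hs0 : s ≠ 0 := ne_of_gt (Real.sqrt_pos.mpr hGpos)
  have hss : s * s = 1 - (2 - 6 * (N / Θ) ^ 2) * (K / (4 * Θ ^ 4))
      + (1 - 21 * (N / Θ) ^ 4) * (K / (4 * Θ ^ 4)) ^ 2 := Real.mul_self_sqrt hGpos.le
  field_simp
  ring_nf
  have hss' : s * s * (16 * Θ ^ 12) =
      16 * Θ ^ 12 - 8 * K * Θ ^ 8 + 24 * K * N ^ 2 * Θ ^ 6 + K ^ 2 * Θ ^ 4 - 21 * K ^ 2 * N ^ 4 := by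
    rw [hss]; field_simp; ring
  linear_combination (-2) * hss'
end
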